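/- For matrices D1, D2 in R^{s×r} with Frobenius norm at most 1, and A1, A2 in R^{q×r} with orthonormal columns (A_i^T A_i = I_r), the Frobenius norm of D1 A1^T - D2 A2^T is at most the operator norm of A1 A1^T - A2 A2^T plus the Frobenius norm of D1 A1^T A2 - D2. -/

import Mathlib

open scoped BigOperators
open Matrix

/-- Frobenius norm of a real matrix. -/
noncomputable def frob {a b : ℕ} (M : Matrix (Fin a) (Fin b) ℝ) : ℝ :=
  Real.sqrt (∑ i, ∑ j, (M i j) ^ 2)

/-- Euclidean norm of the `j`-th row of a matrix. -/
noncomputable def rnorm {a b : ℕ} (M : Matrix (Fin a) (Fin b) ℝ) (j : Fin a) : ℝ :=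
  Real.sqrt (∑ k, (M j k) ^ 2)

/-- Operator (spectral) norm of a real matrix: the largest singular value. -/
noncomputable def opN {a b : ℕ} (M : Matrix (Fin a) (Fin b) ℝ) : ℝ :=
  sSup {c : ℝ | ∃ v : Fin b → ℝ, (∑ j, (v j) ^ 2) ≤ 1 ∧
    c = Real.sqrt (∑ i, (M.mulVec v i) ^ 2)}


/-!
Because `A1ᵀ * A1 = 1`, the difference splits as
`D1 A1ᵀ - D2 A2ᵀ = (D1 A1ᵀ) P + (D1 A1ᵀ A2 - D2) A2ᵀ` with `P = A1 A1ᵀ - A2 A2ᵀ` symmetric.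
Row by row, `‖X Bᵀ‖_F ≤ c ‖X‖_F` as soon as `‖B v‖ ≤ c ‖v‖` for all `v`. Applied to `P` with
`c = ‖P‖_op` and to the isometries `A1`, `A2` with `c = 1`, this bounds the first term by
`‖P‖_op ‖D1‖_F ≤ ‖P‖_op` and the second by `‖D1 A1ᵀ A2 - D2‖_F`.
-/

open WithLp

section Frobenius

open scoped Matrix.Norms.Frobenius

variable {𝕜 : Type*} [RCLike 𝕜] {l m n : Type*} [Fintype l] [Fintype m] [Fintype n]

theorem frobenius_norm_sq_eq_sum_norm_row_sq (X : Matrix m n 𝕜) :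
    ‖X‖ ^ 2 = ∑ i, ‖toLp 2 (X i)‖ ^ 2 :=
  PiLp.norm_sq_eq_of_L2 _ (toLp 2 fun i ↦ toLp 2 (X i))

theorem frobenius_norm_mul_transpose_le {c : ℝ} (hc : 0 ≤ c) (X : Matrix l n 𝕜)
    (B : Matrix m n 𝕜) (hB : ∀ v, ‖toLp 2 (B *ᵥ v)‖ ≤ c * ‖toLp 2 v‖) :
    ‖X * Bᵀ‖ ≤ c * ‖X‖ := by
  have hrow : ∀ i, (X * Bᵀ) i = B *ᵥ X i := fun i ↦ by
    ext j
    simp [mul_apply, mulVec, dotProduct, mul_comm]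
  refine le_of_sq_le_sq ?_ (by positivity)
  rw [mul_pow, frobenius_norm_sq_eq_sum_norm_row_sq, frobenius_norm_sq_eq_sum_norm_row_sq,
    Finset.mul_sum]
  gcongr with i
  rw [hrow, ← mul_pow]
  gcongr
  exact hB _

theorem norm_toLp_mulVec_of_transpose_mul_self_eq_one [DecidableEq n] {A : Matrix m n ℝ}
    (hA : Aᵀ * A = 1) (v : n → ℝ) : ‖toLp 2 (A *ᵥ v)‖ = ‖toLp 2 v‖ := by
  refine (sq_eq_sq₀ (norm_nonneg _) (norm_nonneg _)).1 ?_
  rw [← real_inner_self_eq_norm_sq, ← real_inner_self_eq_norm_sq]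
  simp only [EuclideanSpace.inner_eq_star_dotProduct, star_trivial]
  rw [dotProduct_mulVec, ← mulVec_transpose, mulVec_mulVec, hA, one_mulVec]

theorem frobenius_norm_mul_transpose_le_of_transpose_mul_self_eq_one [DecidableEq n]
    (X : Matrix l n ℝ) {A : Matrix m n ℝ} (hA : Aᵀ * A = 1) : ‖X * Aᵀ‖ ≤ ‖X‖ := by
  simpa using frobenius_norm_mul_transpose_le zero_le_one X A fun v ↦
    (norm_toLp_mulVec_of_transpose_mul_self_eq_one hA v).trans_le (one_mul _).ge

theorem frobenius_norm_mul_transpose_sub_mul_transpose_le [DecidableEq n] {D₁ D₂ : Matrix l n ℝ}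
    {A₁ A₂ : Matrix m n ℝ} (hD₁ : ‖D₁‖ ≤ 1) (hA₁ : A₁ᵀ * A₁ = 1) (hA₂ : A₂ᵀ * A₂ = 1) {c : ℝ}
    (hc : 0 ≤ c) (hP : ∀ v, ‖toLp 2 ((A₁ * A₁ᵀ - A₂ * A₂ᵀ) *ᵥ v)‖ ≤ c * ‖toLp 2 v‖) :
    ‖D₁ * A₁ᵀ - D₂ * A₂ᵀ‖ ≤ c + ‖D₁ * A₁ᵀ * A₂ - D₂‖ := by
  set P := A₁ * A₁ᵀ - A₂ * A₂ᵀ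
  have hP_symm : Pᵀ = P := by simp [P, transpose_sub, transpose_mul]
  have hsplit : D₁ * A₁ᵀ - D₂ * A₂ᵀ = D₁ * A₁ᵀ * Pᵀ + (D₁ * A₁ᵀ * A₂ - D₂) * A₂ᵀ := by
    rw [hP_symm, Matrix.mul_sub, Matrix.sub_mul, Matrix.mul_assoc _ A₂, ← Matrix.mul_assoc _ A₁,
      Matrix.mul_assoc D₁, hA₁, Matrix.mul_one]
    abel
  have hD₁A₁ : ‖D₁ * A₁ᵀ‖ ≤ 1 :=
    (frobenius_norm_mul_transpose_le_of_transpose_mul_self_eq_one D₁ hA₁).trans hD₁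
  calc ‖D₁ * A₁ᵀ - D₂ * A₂ᵀ‖
      ≤ ‖D₁ * A₁ᵀ * Pᵀ‖ + ‖(D₁ * A₁ᵀ * A₂ - D₂) * A₂ᵀ‖ := hsplit ▸ norm_add_le _ _
    _ ≤ c * ‖D₁ * A₁ᵀ‖ + ‖D₁ * A₁ᵀ * A₂ - D₂‖ := by
      gcongr
      · exact frobenius_norm_mul_transpose_le hc _ _ hP
      · exact frobenius_norm_mul_transpose_le_of_transpose_mul_self_eq_one _ hA₂
    _ ≤ c + ‖D₁ * A₁ᵀ * A₂ - D₂‖ := by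
      gcongr
      exact mul_le_of_le_one_right hc hD₁A₁

theorem frob_eq_norm {a b : ℕ} (M : Matrix (Fin a) (Fin b) ℝ) : frob M = ‖M‖ := by
  rw [frob, frobenius_norm_def, Real.sqrt_eq_rpow]
  simp [Real.norm_eq_abs, sq_abs]

end Frobenius

section L2Operator

open scoped Matrix.Norms.L2Operator

theorem opN_eq_l2_opNorm {a b : ℕ} (M : Matrix (Fin a) (Fin b) ℝ) : opN M = ‖M‖ := by
  rw [l2_opNorm_def, ← ContinuousLinearMap.sSup_unitClosedBall_eq_norm, opN]
  congr 1
  ext c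
  simp only [Set.mem_ofPred_eq, LinearEquiv.trans_apply, LinearMap.coe_toContinuousLinearMap',
    EuclideanSpace.norm_eq, ofLp_toLpLin, toLin'_apply, Real.norm_eq_abs, sq_abs, Set.mem_image,
    Metric.mem_closedBall, dist_zero_right, Real.sqrt_le_one]
  constructor
  · rintro ⟨v, hv, rfl⟩
    exact ⟨toLp 2 v, hv, rfl⟩
  · rintro ⟨x, hx, rfl⟩
    exact ⟨x.ofLp, hx, rfl⟩

theorem norm_toLp_mulVec_le_opN {a b : ℕ} (M : Matrix (Fin a) (Fin b) ℝ) (v : Fin b → ℝ) :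
    ‖toLp 2 (M *ᵥ v)‖ ≤ opN M * ‖toLp 2 v‖ :=
  opN_eq_l2_opNorm M ▸ l2_opNorm_mulVec M (toLp 2 v)

theorem opN_nonneg {a b : ℕ} (M : Matrix (Fin a) (Fin b) ℝ) : 0 ≤ opN M :=
  opN_eq_l2_opNorm M ▸ norm_nonneg _

end L2Operator

theorem stmt0_general {s r q : ℕ} (D1 D2 : Matrix (Fin s) (Fin r) ℝ)
    (A1 A2 : Matrix (Fin q) (Fin r) ℝ)
    (hD1 : frob D1 ≤ 1)
    (hA1 : A1ᵀ * A1 = 1) (hA2 : A2ᵀ * A2 = 1) :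
    frob (D1 * A1ᵀ - D2 * A2ᵀ) ≤
      opN (A1 * A1ᵀ - A2 * A2ᵀ) + frob (D1 * A1ᵀ * A2 - D2) := by
  simp only [frob_eq_norm] at hD1 ⊢
  exact frobenius_norm_mul_transpose_sub_mul_transpose_le hD1 hA1 hA2 (opN_nonneg _)
    (norm_toLp_mulVec_le_opN _)

theorem stmt0 {s r q : ℕ} (D1 D2 : Matrix (Fin s) (Fin r) ℝ)
    (A1 A2 : Matrix (Fin q) (Fin r) ℝ)
    (hD1 : frob D1 ≤ 1) (hD2 : frob D2 ≤ 1)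
    (hA1 : A1ᵀ * A1 = 1) (hA2 : A2ᵀ * A2 = 1) :
    frob (D1 * A1ᵀ - D2 * A2ᵀ) ≤
      opN (A1 * A1ᵀ - A2 * A2ᵀ) + frob (D1 * A1ᵀ * A2 - D2) :=
  stmt0_general D1 D2 A1 A2 hD1 hA1 hA2
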